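/- arXiv:2106.14176 — 3 statements merged into one kernel-verified Lean document; each statement's English description precedes it below -/
import Mathlib

section
/- Let G = (V, E) be a finite simple graph with V = {v_1, …, v_n} and E = {e_1, …, e_m}, where e_i = (v_{i,1}, v_{i,2}). Define points p_1, …, p_n ∈ H^m by (p_t)_i = −1 if v_t = v_{i,1}, (p_t)_i = +1 if v_t = v_{i,2}, and (p_t)_i = ⊗ otherwise. Then G is k-colorable if and only if {p_1, …, p_n} can be partitioned into k subsets such that no two points in the same subset have the two values −1 and +1 in a common coordinate; equivalently, iff there is a partition into k subsets and centers c_1,…,c_k ∈ R^m achieving k-means clustering cost 0. -/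
open Finset

/-- The point of `ℍ^m` associated to vertex `t` of a graph with edge list `e`:
coordinate `i` is `−1` if `t` is the first endpoint of edge `i`, `+1` if it is the
second endpoint, and missing otherwise. -/
noncomputable def gpt {n m : ℕ} (e : Fin m → Fin n × Fin n) (t : Fin n) (i : Fin m) :
    Option ℝ :=
  if (e i).1 = t then some (-1)
  else if (e i).2 = t then some 1
  else none

lemma gpt_neg {n m : ℕ} (e : Fin m → Fin n × Fin n) (t : Fin n) (i : Fin m) :
    gpt e t i = some (-1) ↔ (e i).1 = t := by
  unfold gpt
  split_ifs with h1 h2 <;> simp_all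
  norm_num

lemma gpt_pos {n m : ℕ} (e : Fin m → Fin n × Fin n) (t : Fin n) (i : Fin m) :
    gpt e t i = some 1 ↔ ((e i).1 ≠ t ∧ (e i).2 = t) := by
  unfold gpt
  split_ifs with h1 h2 <;> simp_all
  norm_num

/-- Reduction from graph `k`-coloring: the graph given by the edge list `e` (no loops)
is `k`-colorable iff the vertices can be partitioned into `k` groups such that no two
points in the same group carry the values `−1` and `+1` in a common coordinate, iff
there is a `k`-clustering of the points `gpt e t` of cost `0`. -/
theorem stmt10 {n m k : ℕ} (e : Fin m → Fin n × Fin n)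
    (hsimple : ∀ i, (e i).1 ≠ (e i).2) :
    ((∃ col : Fin n → Fin k, ∀ i, col (e i).1 ≠ col (e i).2) ↔
      (∃ f : Fin n → Fin k, ∀ s t : Fin n, f s = f t →
        ∀ i, ¬ ((gpt e s i = some (-1) ∧ gpt e t i = some 1) ∨
                (gpt e s i = some 1 ∧ gpt e t i = some (-1))))) ∧
    ((∃ col : Fin n → Fin k, ∀ i, col (e i).1 ≠ col (e i).2) ↔
      (∃ f : Fin n → Fin k, ∃ c : Fin k → Fin m → ℝ,
        (∑ t : Fin n, ∑ i : Fin m,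
          match gpt e t i with
          | some a => (a - c (f t) i) ^ 2
          | none => 0) = 0)) := by
  constructor
  · constructor
    · rintro ⟨col, hcol⟩
      refine ⟨col, fun s t hst i h => ?_⟩
      rcases h with ⟨h1, h2⟩ | ⟨h1, h2⟩
      · rw [gpt_neg] at h1
        rw [gpt_pos] at h2
        exact hcol i (by rw [h1, h2.2, hst])
      · rw [gpt_pos] at h1
        rw [gpt_neg] at h2
        exact hcol i (by rw [h1.2, h2, hst])
    · rintro ⟨f, hf⟩
      refine ⟨f, fun i hi => ?_⟩
      exact hf _ _ hi i (Or.inl ⟨(gpt_neg e _ i).mpr rfl,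
        (gpt_pos e _ i).mpr ⟨hsimple i, rfl⟩⟩)
  · constructor
    · rintro ⟨col, hcol⟩
      refine ⟨col, fun j i => if col (e i).1 = j then -1 else 1, ?_⟩
      refine Finset.sum_eq_zero fun t _ => Finset.sum_eq_zero fun i _ => ?_
      unfold gpt
      split_ifs with h1 h2
      · simp [h1]
      · have : col (e i).1 ≠ col t := by rw [← h2]; exact hcol i
        simp [this]
      · rfl
    · rintro ⟨f, c, hsum⟩
      have hnn : ∀ t : Fin n, ∀ i : Fin m,
          (0:ℝ) ≤ match gpt e t i with
            | some a => (a - c (f t) i) ^ 2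
            | none => 0 := by
        intro t i
        cases gpt e t i with
        | some a => exact sq_nonneg _
        | none => exact le_refl 0
      have hzero : ∀ t : Fin n, ∀ i : Fin m,
          (match gpt e t i with
            | some a => (a - c (f t) i) ^ 2
            | none => 0) = 0 := by
        intro t i
        have h1 := (Finset.sum_eq_zero_iff_of_nonneg
          (fun t _ => Finset.sum_nonneg fun i _ => hnn t i)).mp hsum t (Finset.mem_univ t)
        exact (Finset.sum_eq_zero_iff_of_nonneg (fun i _ => hnn t i)).mp h1 i
          (Finset.mem_univ i)
      refine ⟨f, fun i hi => ?_⟩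
      have hA := hzero (e i).1 i
      have hB := hzero (e i).2 i
      rw [show gpt e (e i).1 i = some (-1) from (gpt_neg e _ i).mpr rfl] at hA
      rw [show gpt e (e i).2 i = some 1 from (gpt_pos e _ i).mpr ⟨hsimple i, rfl⟩] at hB
      simp only [sq_eq_zero_iff, sub_eq_zero] at hA hB
      rw [hi] at hA
      rw [← hB] at hA
      norm_num at hA
end

section
/- Let P be a finite multiset of reals, Q ⊆ P with |Q| ≥ c|P| for 0 < c ≤ 1. Let μ = (Σ_{q∈Q} q)/|Q| be the mean of Q and V = Σ_{q∈Q} (q − μ)^2. If a multiset sample T of m elements is drawn independently and uniformly from P and we set x = (Σ_{t∈T∩Q} t)/|T∩Q| (conditioned on T ⊆ Q), then E[Σ_{q∈Q}(q − x)^2 | T ⊆ Q] = (1 + 1/m)·V. In particular, by Markov's inequality, with probability at least 1 − δ (conditioned on T ⊆ Q), Σ_{q∈Q}(q − x)^2 ≤ (1 + 1/(mδ))·V. -/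
open Finset
open scoped Classical

private lemma aux_sum_sq {α : Type*} [Fintype α] (g : α → ℝ) (hg : ∑ a, g a = 0) :
    ∀ m : ℕ, ∑ ω : Fin m → α, (∑ i, g (ω i)) ^ 2
      = (m : ℝ) * (Fintype.card α : ℝ) ^ (m - 1) * ∑ a, g a ^ 2 := by
  intro m
  induction m with
  | zero => simp
  | succ m ih =>
    have hcardfun : (Fintype.card (Fin m → α) : ℝ) = (Fintype.card α : ℝ) ^ m := by
      simp [Fintype.card_fun]
    have hstep : ∑ ω : Fin (m+1) → α, (∑ i, g (ω i)) ^ 2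
        = ∑ a : α, ∑ ω : Fin m → α, (g a + ∑ i, g (ω i)) ^ 2 := by
      rw [← (Fin.consEquiv (fun _ : Fin (m+1) => α)).sum_comp
        (fun ω => (∑ i, g (ω i)) ^ 2)]
      rw [Fintype.sum_prod_type]
      refine Finset.sum_congr rfl fun a _ => Finset.sum_congr rfl fun ω _ => ?_
      congr 1
      rw [Fin.sum_univ_succ]
      simp [Fin.consEquiv]
    have inner : ∀ a : α, ∑ ω : Fin m → α, (g a + ∑ i, g (ω i)) ^ 2
        = (Fintype.card α : ℝ) ^ m * g a ^ 2
          + 2 * g a * (∑ ω : Fin m → α, ∑ i, g (ω i))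
          + (m : ℝ) * (Fintype.card α : ℝ) ^ (m - 1) * ∑ b, g b ^ 2 := by
      intro a
      have hexp : ∀ ω : Fin m → α, (g a + ∑ i, g (ω i)) ^ 2
          = g a ^ 2 + 2 * g a * (∑ i, g (ω i)) + (∑ i, g (ω i)) ^ 2 :=
        fun ω => by ring
      simp_rw [hexp]
      rw [Finset.sum_add_distrib, Finset.sum_add_distrib, Finset.sum_const,
        Finset.card_univ, nsmul_eq_mul, hcardfun, ← Finset.mul_sum, ih]
    rw [hstep]
    simp_rw [inner]
    rw [Finset.sum_add_distrib, Finset.sum_add_distrib]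
    have h2 : ∑ a : α, 2 * g a * (∑ ω : Fin m → α, ∑ i, g (ω i)) = 0 := by
      rw [← Finset.sum_mul]
      have h2' : ∑ a : α, 2 * g a = 2 * ∑ a, g a := by rw [Finset.mul_sum]
      rw [h2', hg]; ring
    rw [h2]
    rw [← Finset.mul_sum, Finset.sum_const, Finset.card_univ, nsmul_eq_mul]
    have hq_pow : (Fintype.card α : ℝ) * ((m : ℝ) * (Fintype.card α : ℝ) ^ (m - 1))
        = (m : ℝ) * (Fintype.card α : ℝ) ^ m := by
      cases m with
      | zero => simp
      | succ k => rw [Nat.add_sub_cancel, pow_succ]; ring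
    rw [Nat.add_sub_cancel]
    push_cast
    linear_combination (∑ b, g b ^ 2) * hq_pow

/-- One-dimensional sampling lemma (Inaba et al.): drawing `m` uniform independent
samples from `P` conditioned on all samples lying in `Q` is uniform over `Q^m`; the
empirical mean `x` of the sample then satisfies
`E[Σ_{q∈Q}(q − x)²] = (1 + 1/m)·V`, and by Markov's inequality, with probability at
least `1 − δ`, `Σ_{q∈Q}(q − x)² ≤ (1 + 1/(mδ))·V`. -/
theorem stmt17 (n m : ℕ) (hm : 0 < m) (p : Fin n → ℝ)
    (Q : Finset (Fin n)) (hQne : Q.Nonempty)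
    (c : ℝ) (hc0 : 0 < c) (hc1 : c ≤ 1) (hQc : c * n ≤ (Q.card : ℝ))
    (μ V : ℝ)
    (hμ : μ = (∑ j ∈ Q, p j) / (Q.card : ℝ))
    (hV : V = ∑ j ∈ Q, (p j - μ) ^ 2)
    (f : (Fin m → {j : Fin n // j ∈ Q}) → ℝ)
    (hf : ∀ ω, f ω = ∑ j ∈ Q, (p j - (∑ i, p (ω i).1) / (m : ℝ)) ^ 2) :
    (∑ ω : Fin m → {j : Fin n // j ∈ Q}, f ω) / ((Q.card : ℝ) ^ m)
        = (1 + 1 / (m : ℝ)) * V ∧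
    ∀ δ : ℝ, 0 < δ → δ < 1 →
      (1 - δ) * ((Q.card : ℝ) ^ m)
        ≤ ((Finset.univ.filter fun ω : Fin m → {j : Fin n // j ∈ Q} =>
            f ω ≤ (1 + 1 / ((m : ℝ) * δ)) * V).card : ℝ) := by
  have hq0 : (0:ℝ) < (Q.card : ℝ) := by
    exact_mod_cast Finset.card_pos.mpr hQne
  have hm0 : (0:ℝ) < (m : ℝ) := by exact_mod_cast hm
  set g : {j : Fin n // j ∈ Q} → ℝ := fun a => p a.1 - μ with hg
  have hsumQ : ∑ j ∈ Q, (p j - μ) = 0 := by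
    rw [Finset.sum_sub_distrib, Finset.sum_const, nsmul_eq_mul, hμ]
    field_simp
    ring
  have hgsum : ∑ a, g a = 0 := by
    rw [hg, Finset.sum_coe_sort Q (fun j => p j - μ)]
    exact hsumQ
  have hgsq : ∑ a, g a ^ 2 = V := by
    rw [hg, Finset.sum_coe_sort Q (fun j => (p j - μ) ^ 2)]
    exact hV.symm
  have hcard : (Fintype.card {j : Fin n // j ∈ Q} : ℝ) = (Q.card : ℝ) := by
    simp [Fintype.card_coe]
  have hf' : ∀ ω, f ω = V + (Q.card : ℝ) * ((∑ i, g (ω i)) / m) ^ 2 := by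
    intro ω
    have hx : (∑ i, p (ω i).1) / (m : ℝ) - μ = (∑ i, g (ω i)) / m := by
      rw [hg]
      have h1 : ∑ i, (p (ω i).1 - μ) = (∑ i, p (ω i).1) - m * μ := by
        rw [Finset.sum_sub_distrib, Finset.sum_const, Finset.card_univ,
          Fintype.card_fin, nsmul_eq_mul]
      rw [h1]
      field_simp
    set x := (∑ i, p (ω i).1) / (m : ℝ) with hxdef
    have expand : ∀ j, (p j - x) ^ 2
        = (p j - μ) ^ 2 - 2 * (x - μ) * (p j - μ) + (x - μ) ^ 2 := by
      intro j; ring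
    rw [hf ω]
    simp_rw [← hxdef, expand]
    rw [Finset.sum_add_distrib, Finset.sum_sub_distrib, ← Finset.mul_sum,
      hsumQ, Finset.sum_const, nsmul_eq_mul, hx, ← hV]
    ring
  have hsum_sq := aux_sum_sq g hgsum m
  rw [hcard, hgsq] at hsum_sq
  have hqm0 : ((Q.card : ℝ)) ^ m ≠ 0 := pow_ne_zero m (ne_of_gt hq0)
  have hcardfun : (Fintype.card (Fin m → {j : Fin n // j ∈ Q}) : ℝ)
      = (Q.card : ℝ) ^ m := by
    simp [Fintype.card_fun, Fintype.card_coe]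
  have hpow : (Q.card : ℝ) * (Q.card : ℝ) ^ (m - 1) = (Q.card : ℝ) ^ m := by
    rw [← pow_succ']
    congr 1
    omega
  have hsumf : ∑ ω : Fin m → {j : Fin n // j ∈ Q}, f ω
      = (1 + 1 / (m : ℝ)) * V * (Q.card : ℝ) ^ m := by
    simp_rw [hf']
    rw [Finset.sum_add_distrib, Finset.sum_const, Finset.card_univ, nsmul_eq_mul,
      hcardfun]
    have hsplit : ∑ ω : Fin m → {j : Fin n // j ∈ Q},
        (Q.card : ℝ) * ((∑ i, g (ω i)) / m) ^ 2
        = (Q.card : ℝ) / (m:ℝ)^2 * ∑ ω : Fin m → {j : Fin n // j ∈ Q},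
            (∑ i, g (ω i)) ^ 2 := by
      rw [Finset.mul_sum]
      refine Finset.sum_congr rfl fun ω _ => ?_
      field_simp
    rw [hsplit, hsum_sq]
    have hmm : (Q.card : ℝ) / (m:ℝ)^2 * ((m:ℝ) * (Q.card : ℝ) ^ (m-1) * V)
        = (Q.card : ℝ) ^ m * V * (1 / (m:ℝ)) := by
      rw [show (Q.card : ℝ) / (m:ℝ)^2 * ((m:ℝ) * (Q.card : ℝ) ^ (m-1) * V)
          = ((Q.card : ℝ) * (Q.card : ℝ) ^ (m-1)) * V * ((m:ℝ) / (m:ℝ)^2) by ring,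
        hpow]
      congr 1
      rw [pow_two]
      field_simp
    rw [hmm]
    ring
  constructor
  · rw [hsumf]
    field_simp
  · intro δ hδ0 hδ1
    set bound := (1 + 1 / ((m : ℝ) * δ)) * V with hbound
    set G := Finset.univ.filter fun ω : Fin m → {j : Fin n // j ∈ Q} =>
      f ω ≤ bound with hG
    set B := Finset.univ.filter fun ω : Fin m → {j : Fin n // j ∈ Q} =>
      ¬ (f ω ≤ bound) with hB
    have hVnn : 0 ≤ V := by
      rw [hV]; exact Finset.sum_nonneg fun j _ => sq_nonneg _
    have hfV : ∀ ω, V ≤ f ω := by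
      intro ω; rw [hf' ω]
      nlinarith [sq_nonneg ((∑ i, g (ω i)) / m), hq0.le]
    have hGB : (G.card : ℝ) + (B.card : ℝ) = (Q.card : ℝ) ^ m := by
      have hpart := Finset.card_filter_add_card_filter_not
        (s := (Finset.univ : Finset (Fin m → {j : Fin n // j ∈ Q})))
        (p := fun ω => f ω ≤ bound)
      rw [← hG, ← hB, Finset.card_univ] at hpart
      rw [← hcardfun]
      exact_mod_cast hpart
    have hmd : (0:ℝ) < (m:ℝ) * δ := mul_pos hm0 hδ0
    have hexcess_all : ∑ ω : Fin m → {j : Fin n // j ∈ Q}, (f ω - V)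
        = V / (m:ℝ) * (Q.card : ℝ) ^ m := by
      rw [Finset.sum_sub_distrib, hsumf, Finset.sum_const, Finset.card_univ,
        nsmul_eq_mul, hcardfun]
      field_simp
      ring
    have hBsum : (B.card : ℝ) * (V / ((m:ℝ) * δ)) ≤ ∑ ω ∈ B, (f ω - V) := by
      have hpt : ∀ ω ∈ B, V / ((m:ℝ) * δ) ≤ f ω - V := by
        intro ω hω
        rw [hB, Finset.mem_filter] at hω
        have hgt : bound < f ω := lt_of_not_ge hω.2
        rw [hbound] at hgt
        have heq : (1 + 1 / ((m : ℝ) * δ)) * V = V + V / ((m:ℝ)*δ) := by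
          field_simp
        linarith [heq ▸ hgt.le]
      calc (B.card : ℝ) * (V / ((m:ℝ) * δ)) = ∑ _ω ∈ B, V / ((m:ℝ) * δ) := by
            rw [Finset.sum_const, nsmul_eq_mul]
        _ ≤ ∑ ω ∈ B, (f ω - V) := Finset.sum_le_sum hpt
    have hsum_excess : ∑ ω ∈ B, (f ω - V)
        ≤ V / (m:ℝ) * (Q.card : ℝ) ^ m := by
      have h1 : ∑ ω ∈ B, (f ω - V)
          ≤ ∑ ω : Fin m → {j : Fin n // j ∈ Q}, (f ω - V) :=
        Finset.sum_le_sum_of_subset_of_nonneg (Finset.subset_univ B)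
          (fun ω _ _ => by linarith [hfV ω])
      linarith [hexcess_all]
    have hBle : (B.card : ℝ) ≤ δ * (Q.card : ℝ) ^ m := by
      rcases eq_or_lt_of_le hVnn with hV0 | hVpos
      · -- V = 0 : every ω is good, B is empty
        have hgood : ∀ ω, f ω ≤ bound := by
          intro ω
          have hall : ∑ ω' : Fin m → {j : Fin n // j ∈ Q}, (f ω' - V) = 0 := by
            rw [hexcess_all, ← hV0]; ring
          have hfeq : f ω - V = 0 := by
            have hnn : ∀ ω' ∈ (Finset.univ : Finset (Fin m → {j : Fin n // j ∈ Q})),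
                0 ≤ f ω' - V := fun ω' _ => by linarith [hfV ω']
            exact (Finset.sum_eq_zero_iff_of_nonneg hnn).mp hall ω (Finset.mem_univ ω)
          have hfz : f ω = 0 := by linarith [hfeq]
          rw [hbound, ← hV0, hfz]
          simp
        have hBemp : B = ∅ := by
          rw [hB, Finset.filter_eq_empty_iff]
          intro ω _
          exact not_not_intro (hgood ω)
        rw [hBemp]
        simp
        positivity
      · -- V > 0
        have hVd : (0:ℝ) < V / ((m:ℝ) * δ) := div_pos hVpos hmd
        have key : (B.card : ℝ) * (V / ((m:ℝ) * δ)) ≤ V / (m:ℝ) * (Q.card : ℝ) ^ m :=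
          le_trans hBsum hsum_excess
        have h4 : (V / (m:ℝ) * (Q.card : ℝ) ^ m) / (V / ((m:ℝ)*δ))
            = δ * (Q.card : ℝ) ^ m := by
          field_simp
        have h5 : (B.card : ℝ) ≤ (V / (m:ℝ) * (Q.card : ℝ) ^ m) / (V / ((m:ℝ)*δ)) :=
          (le_div_iff₀ hVd).mpr key
        rw [h4] at h5
        exact h5
    linarith [hGB, hBle]
end

section
/- For every integer δ ≥ 1 and k ≥ 2, letting r = (2^{k+1} − 3)/(2^{k+1} − 2), the inequality r^{2δ−1}/(2^{k+1} − 2) + r + r^{δ^2}/(2^{k+1} − 2)^{2δ} ≤ 1 holds. -/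
/-- Arithmetic inequality in the inductive step of Claim final_general: for `δ ≥ 1`,
`k ≥ 2` and `r = (2^{k+1} − 3)/(2^{k+1} − 2)`,
`r^{2δ−1}/(2^{k+1} − 2) + r + r^{δ²}/(2^{k+1} − 2)^{2δ} ≤ 1`. -/
theorem stmt19 (δ k : ℕ) (hδ : 1 ≤ δ) (hk : 2 ≤ k)
    (r : ℝ) (hr : r = ((2 : ℝ) ^ (k + 1) - 3) / ((2 : ℝ) ^ (k + 1) - 2)) :
    r ^ (2 * δ - 1) / ((2 : ℝ) ^ (k + 1) - 2) + r
      + r ^ (δ ^ 2) / ((2 : ℝ) ^ (k + 1) - 2) ^ (2 * δ) ≤ 1 := by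
  have h8 : (8 : ℝ) ≤ (2 : ℝ) ^ (k + 1) := by
    calc (8 : ℝ) = 2 ^ 3 := by norm_num
    _ ≤ 2 ^ (k + 1) := by
      apply pow_le_pow_right₀ (by norm_num)
      omega
  set D : ℝ := (2 : ℝ) ^ (k + 1) - 2 with hD
  have hD6 : (6 : ℝ) ≤ D := by simp [hD]; linarith
  have hDpos : (0 : ℝ) < D := by linarith
  have hr0 : 0 ≤ r := by
    rw [hr]
    apply div_nonneg <;> linarith
  have hr1 : r ≤ 1 := by
    rw [hr, div_le_one hDpos]; linarith
  have h1 : r ^ (2 * δ - 1) ≤ r := by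
    calc r ^ (2 * δ - 1) ≤ r ^ 1 := pow_le_pow_of_le_one hr0 hr1 (by omega)
    _ = r := pow_one r
  have h2 : r ^ (δ ^ 2) ≤ 1 := pow_le_one₀ hr0 hr1
  have h3 : D ^ 2 ≤ D ^ (2 * δ) := pow_le_pow_right₀ (by linarith) (by omega)
  have hD2pos : (0 : ℝ) < D ^ 2 := by positivity
  have hDdpos : (0 : ℝ) < D ^ (2 * δ) := by positivity
  have t1 : r ^ (2 * δ - 1) / D ≤ r / D := by
    apply div_le_div_of_nonneg_right h1 hDpos.le
  have t2 : r ^ (δ ^ 2) / D ^ (2 * δ) ≤ 1 / D ^ 2 := by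
    calc r ^ (δ ^ 2) / D ^ (2 * δ) ≤ 1 / D ^ (2 * δ) := by
          apply div_le_div_of_nonneg_right h2 hDdpos.le
    _ ≤ 1 / D ^ 2 := by
      apply one_div_le_one_div_of_le hD2pos h3
  have key : r / D + r + 1 / D ^ 2 = 1 := by
    rw [hr]
    have : D ≠ 0 := ne_of_gt hDpos
    field_simp
    ring
  linarith
end
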